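/- For every quantitative definite clause program P, every atom a and every real number v, the following are equivalent: (1) B a ≥ v for every model B of P; (2) A a ≥ v, where A is the pointwise supremum of the P-chain (the minimal model of P). -/
import Mathlib


/-- A quantitative definite clause: a head atom, a list of body atoms,
and a numerical factor. -/
structure QClause (α : Type*) where
  head : α
  body : List α
  factor : ℝ

variable {α : Type*}

/-- The minimum of the values of an interpretation over a list of atoms,
with the empty list yielding 1. -/
def bodyMin (I : α → ℝ) (l : List α) : ℝ := (l.map I).foldr min 1

/-- A quantitative definite clause program: a finite set of clauses whose
factors lie in (0,1]. -/
def QProgram (P : Set (QClause α)) : Prop :=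
  P.Finite ∧ ∀ c ∈ P, 0 < c.factor ∧ c.factor ≤ 1

/-- An interpretation assigns to each atom a value in [0,1]. -/
def IsInterp (I : α → ℝ) : Prop := ∀ a, 0 ≤ I a ∧ I a ≤ 1

/-- An interpretation is a model of `P` iff it is an interpretation and for
every clause `(h, [b₁,…,b_k], f)` of `P`, `I h ≥ f * min {I b₁, …, I b_k}`. -/
def IsModel (P : Set (QClause α)) (I : α → ℝ) : Prop :=
  IsInterp I ∧ ∀ c ∈ P, c.factor * bodyMin I c.body ≤ I c.head

/-- The `P`-chain: `A₀ a = 0` and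
`A_{i+1} a = sup { f * min {A_i b₁, …, A_i b_k} : (a,[b₁,…,b_k],f) ∈ P }`
(in ℝ, `sSup ∅ = 0`). -/
noncomputable def chain (P : Set (QClause α)) : ℕ → α → ℝ
  | 0, _ => 0
  | i + 1, a =>
      sSup {x | ∃ c ∈ P, c.head = a ∧ x = c.factor * bodyMin (chain P i) c.body}

lemma bodyMin_nonneg {I : α → ℝ} (h0 : ∀ a, 0 ≤ I a) (l : List α) :
    0 ≤ bodyMin I l := by
  induction l with
  | nil => simp [bodyMin]
  | cons b t ih => simpa [bodyMin] using ⟨h0 b, ih⟩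

lemma bodyMin_le_one (I : α → ℝ) (l : List α) : bodyMin I l ≤ 1 := by
  induction l with
  | nil => simp [bodyMin]
  | cons b t ih =>
      simp only [bodyMin, List.map_cons, List.foldr_cons]
      exact le_trans (min_le_right _ _) ih

lemma bodyMin_mono {I J : α → ℝ} (h : ∀ a, I a ≤ J a) (l : List α) :
    bodyMin I l ≤ bodyMin J l := by
  induction l with
  | nil => simp [bodyMin]
  | cons b t ih =>
      simp only [bodyMin, List.map_cons, List.foldr_cons] at *
      exact min_le_min (h b) ih

lemma chain_nonneg (P : Set (QClause α)) (hP : QProgram P) :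
    ∀ i a, 0 ≤ chain P i a := by
  intro i
  induction i with
  | zero => intro a; simp [chain]
  | succ i ih =>
      intro a
      apply Real.sSup_nonneg
      rintro x ⟨c, hc, -, rfl⟩
      exact mul_nonneg (hP.2 c hc).1.le (bodyMin_nonneg ih _)

lemma chain_le_one (P : Set (QClause α)) (hP : QProgram P) :
    ∀ i a, chain P i a ≤ 1 := by
  intro i
  induction i with
  | zero => intro a; simp [chain]
  | succ i ih =>
      intro a
      apply Real.sSup_le _ zero_le_one
      rintro x ⟨c, hc, -, rfl⟩
      exact mul_le_one₀ (hP.2 c hc).2 (bodyMin_nonneg (chain_nonneg P hP i) _)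
        (bodyMin_le_one _ _)

lemma chainSet_bddAbove (P : Set (QClause α)) (hP : QProgram P) (i : ℕ) (a : α) :
    BddAbove {x | ∃ c ∈ P, c.head = a ∧ x = c.factor * bodyMin (chain P i) c.body} := by
  refine ⟨1, ?_⟩
  rintro x ⟨c, hc, -, rfl⟩
  exact mul_le_one₀ (hP.2 c hc).2 (bodyMin_nonneg (chain_nonneg P hP i) _)
    (bodyMin_le_one _ _)

lemma chain_mono_succ (P : Set (QClause α)) (hP : QProgram P) :
    ∀ i a, chain P i a ≤ chain P (i + 1) a := by
  intro i
  induction i with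
  | zero => intro a; simpa [chain] using chain_nonneg P hP 1 a
  | succ i ih =>
      intro a
      apply Real.sSup_le _ (chain_nonneg P hP (i + 2) a)
      rintro x ⟨c, hc, hhead, rfl⟩
      calc c.factor * bodyMin (chain P i) c.body
          ≤ c.factor * bodyMin (chain P (i + 1)) c.body :=
            mul_le_mul_of_nonneg_left (bodyMin_mono ih _) (hP.2 c hc).1.le
        _ ≤ chain P (i + 2) a :=
            le_csSup (chainSet_bddAbove P hP (i + 1) a) ⟨c, hc, hhead, rfl⟩

lemma chain_mono (P : Set (QClause α)) (hP : QProgram P) (a : α) :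
    Monotone (fun i => chain P i a) :=
  monotone_nat_of_le_succ (fun i => chain_mono_succ P hP i a)

lemma chain_bddAbove (P : Set (QClause α)) (hP : QProgram P) (a : α) :
    BddAbove (Set.range fun i => chain P i a) :=
  ⟨1, by rintro x ⟨i, rfl⟩; exact chain_le_one P hP i a⟩

lemma chain_le_model (P : Set (QClause α)) (hP : QProgram P) {B : α → ℝ}
    (hB : IsModel P B) : ∀ i a, chain P i a ≤ B a := by
  intro i
  induction i with
  | zero => intro a; simpa [chain] using (hB.1 a).1
  | succ i ih =>
      intro a
      apply Real.sSup_le _ (hB.1 a).1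
      rintro x ⟨c, hc, hhead, rfl⟩
      calc c.factor * bodyMin (chain P i) c.body
          ≤ c.factor * bodyMin B c.body :=
            mul_le_mul_of_nonneg_left (bodyMin_mono ih _) (hP.2 c hc).1.le
        _ ≤ B c.head := hB.2 c hc
        _ = B a := by rw [hhead]

lemma bodyMin_sup_le (P : Set (QClause α)) (hP : QProgram P) (l : List α) :
    bodyMin (fun a => ⨆ i : ℕ, chain P i a) l ≤ ⨆ i : ℕ, bodyMin (chain P i) l := by
  induction l with
  | nil =>
      simp only [bodyMin, List.map_nil, List.foldr_nil]
      exact le_ciSup_of_le ⟨1, by rintro x ⟨i, rfl⟩; simp [bodyMin]⟩ 0 le_rfl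
  | cons b t ih =>
      simp only [bodyMin, List.map_cons, List.foldr_cons] at *
      apply le_of_forall_lt
      intro x hx
      rw [lt_min_iff] at hx
      obtain ⟨i, hi⟩ := exists_lt_of_lt_ciSup hx.1
      obtain ⟨j, hj⟩ := exists_lt_of_lt_ciSup (lt_of_lt_of_le hx.2 ih)
      have h1 : x < chain P (max i j) b :=
        lt_of_lt_of_le hi (chain_mono P hP b (le_max_left i j))
      have h2 : x < (t.map (chain P (max i j))).foldr min 1 := by
        refine lt_of_lt_of_le hj ?_
        have := bodyMin_mono (fun a => chain_mono P hP a (le_max_right i j)) t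
        simpa [bodyMin] using this
      have hbdd : BddAbove (Set.range fun i : ℕ =>
          min (chain P i b) ((t.map (chain P i)).foldr min 1)) := by
        refine ⟨1, ?_⟩
        rintro y ⟨k, rfl⟩
        exact le_trans (min_le_left _ _) (chain_le_one P hP k b)
      exact lt_of_lt_of_le (lt_min h1 h2) (le_ciSup hbdd (max i j))

lemma supChain_isModel (P : Set (QClause α)) (hP : QProgram P) :
    IsModel P (fun a => ⨆ i : ℕ, chain P i a) := by
  constructor
  · intro a
    constructor
    · exact le_ciSup_of_le (chain_bddAbove P hP a) 0 (by simp [chain])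
    · exact ciSup_le (fun i => chain_le_one P hP i a)
  · intro c hc
    have hf : 0 ≤ c.factor := (hP.2 c hc).1.le
    calc c.factor * bodyMin (fun a => ⨆ i : ℕ, chain P i a) c.body
        ≤ c.factor * ⨆ i : ℕ, bodyMin (chain P i) c.body :=
          mul_le_mul_of_nonneg_left (bodyMin_sup_le P hP c.body) hf
      _ = ⨆ i : ℕ, c.factor * bodyMin (chain P i) c.body :=
          Real.mul_iSup_of_nonneg hf _
      _ ≤ ⨆ i : ℕ, chain P i c.head := by
          apply ciSup_le
          intro i
          refine le_ciSup_of_le (chain_bddAbove P hP c.head) (i + 1) ?_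
          exact le_csSup (chainSet_bddAbove P hP i c.head) ⟨c, hc, rfl, rfl⟩

/-- `a` holds at value at least `v` in every model of `P` iff it does so in
the minimal model (the pointwise supremum of the `P`-chain). -/
theorem stmt_8 (P : Set (QClause α)) (hP : QProgram P) (a : α) (v : ℝ) :
    (∀ B : α → ℝ, IsModel P B → v ≤ B a) ↔ v ≤ ⨆ i : ℕ, chain P i a := by
  constructor
  · intro h
    exact h _ (supChain_isModel P hP)
  · intro h B hB
    exact le_trans h (ciSup_le (fun i => chain_le_model P hP hB i a))
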